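/- arXiv:2206.06854 — 2 statements merged into one kernel-verified Lean document; each statement's English description precedes it below -/
import Mathlib

section
/- Let E be a complete real inner product space and let f : E → ℝ be 1-Lipschitz and differentiable at x ∈ E. Suppose there exists y ∈ E with y ≠ x such that f(x) ≥ 0, f(y) ≤ 0, and f(x) - f(y) = ‖x - y‖. Then the point x_δ = x - f(x) • ∇f(x) satisfies f(x_δ) = 0, ‖x - x_δ‖ = f(x), and for every z ∈ E with f(z) ≤ 0 one has ‖x - z‖ ≥ ‖x - x_δ‖. Hence x_δ realizes the minimum of ‖x - z‖ over all z with f(z) ≤ 0, i.e. x_δ is an optimal adversarial example for x. -/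
/-!
Along the segment from `x` to `y` the 1-Lipschitz function `f` drops at unit speed, so its
one-sided directional derivative at `x` towards `y` is `-1`. Since `‖∇f(x)‖ ≤ 1`, equality in
Cauchy–Schwarz forces `∇f(x) = (x - y) / ‖x - y‖`. Hence `x - f(x) ∇f(x)` is the point of the
segment at distance `f(x)` from `x`, where `f` vanishes, and the Lipschitz bound
`f(x) - f(z) ≤ ‖x - z‖` shows that no `z` with `f(z) ≤ 0` is closer to `x`.
-/

open Filter Topology InnerProductSpace

section Lipschitz

variable {E : Type*} [SeminormedAddCommGroup E] {f : E → ℝ}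

theorem LipschitzWith.sub_le_norm_sub (hf : LipschitzWith 1 f) (a b : E) :
    f a - f b ≤ ‖a - b‖ := by
  simpa [Real.dist_eq, dist_eq_norm] using
    (le_abs_self _).trans (hf.dist_le_mul a b)

/-- The Lipschitz bounds from `x` to an intermediate point and from there to `y` add up to the
equality `hxy`, so both are equalities. -/
theorem LipschitzWith.apply_add_smul_sub_of_sub_eq_norm [NormedSpace ℝ E]
    (hf : LipschitzWith 1 f) {x y : E} (hxy : f x - f y = ‖x - y‖) {t : ℝ} (ht₀ : 0 ≤ t)
    (ht₁ : t ≤ 1) :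
    f (x + t • (y - x)) = f x - t * ‖x - y‖ := by
  have hx := hf.sub_le_norm_sub x (x + t • (y - x))
  have hy := hf.sub_le_norm_sub (x + t • (y - x)) y
  have ex : x - (x + t • (y - x)) = t • (x - y) := by module
  have ey : x + t • (y - x) - y = (1 - t) • (x - y) := by module
  rw [ex, norm_smul, Real.norm_of_nonneg ht₀] at hx
  rw [ey, norm_smul, Real.norm_of_nonneg (sub_nonneg.2 ht₁)] at hy
  linarith

end Lipschitz

theorem HasFDerivAt.apply_eq_of_eventually_eq_add_mul {E : Type*} [NormedAddCommGroup E]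
    [NormedSpace ℝ E] {f : E → ℝ} {f' : E →L[ℝ] ℝ} {x : E} (hf : HasFDerivAt f f' x) {v : E}
    {c : ℝ} (h : ∀ᶠ t in 𝓝[>] 0, f (x + t • v) = f x + t * c) : f' v = c := by
  have hline : HasDerivWithinAt (fun t : ℝ ↦ f (x + t • v)) (f' v) (Set.Ioi 0) 0 :=
    (hf.hasLineDerivAt v).hasDerivWithinAt
  have haffine : HasDerivWithinAt (fun t : ℝ ↦ f (x + t • v)) c (Set.Ioi 0) 0 :=
    ((hasDerivAt_mul_const c).const_add (f x)).hasDerivWithinAt.congr_of_eventuallyEq h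
      (by simp)
  exact (uniqueDiffWithinAt_Ioi 0).eq_deriv _ hline haffine

theorem norm_gradient_le_of_lipschitzWith {E : Type*} [NormedAddCommGroup E]
    [InnerProductSpace ℝ E] [CompleteSpace E] {f : E → ℝ} {C : NNReal} (hf : LipschitzWith C f)
    (x : E) : ‖gradient f x‖ ≤ C := by
  rw [gradient, LinearIsometryEquiv.norm_map]
  exact norm_fderiv_le_of_lipschitz ℝ hf

/-- Equality in Cauchy–Schwarz: `‖‖v‖ • g + v‖² = ‖v‖² (‖g‖² - 1) ≤ 0`. -/
theorem norm_smul_eq_neg_of_inner_eq_neg_norm {E : Type*} [NormedAddCommGroup E]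
    [InnerProductSpace ℝ E] {g v : E} (hg : ‖g‖ ≤ 1) (hgv : ⟪g, v⟫_ℝ = -‖v‖) :
    ‖v‖ • g = -v := by
  have hsq : ‖‖v‖ • g + v‖ ^ 2 = ‖v‖ ^ 2 * (‖g‖ ^ 2 - 1) := by
    rw [norm_add_sq_real, norm_smul, real_inner_smul_left, hgv,
      Real.norm_of_nonneg (norm_nonneg v)]
    ring
  have hle : ‖‖v‖ • g + v‖ ^ 2 ≤ 0 := by
    rw [hsq]
    exact mul_nonpos_of_nonneg_of_nonpos (sq_nonneg _) (by nlinarith [norm_nonneg g])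
  exact eq_neg_of_add_eq_zero_left
    (norm_eq_zero.1 ((pow_eq_zero_iff two_ne_zero).1 (le_antisymm hle (sq_nonneg _))))

theorem LipschitzWith.norm_sub_smul_gradient_eq_sub {E : Type*} [NormedAddCommGroup E]
    [InnerProductSpace ℝ E] [CompleteSpace E] {f : E → ℝ} (hf : LipschitzWith 1 f) {x y : E}
    (hdiff : DifferentiableAt ℝ f x) (hxy : f x - f y = ‖x - y‖) :
    ‖x - y‖ • gradient f x = x - y := by
  have hslope : ∀ᶠ t in 𝓝[>] 0, f (x + t • (y - x)) = f x + t * -‖y - x‖ := by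
    filter_upwards [Ioo_mem_nhdsGT zero_lt_one] with t ht
    rw [hf.apply_add_smul_sub_of_sub_eq_norm hxy ht.1.le ht.2.le, norm_sub_rev]
    ring
  have hinner : ⟪gradient f x, y - x⟫_ℝ = -‖y - x‖ := by
    simpa using hdiff.hasGradientAt.hasFDerivAt.apply_eq_of_eventually_eq_add_mul hslope
  simpa [norm_sub_rev y x] using
    norm_smul_eq_neg_of_inner_eq_neg_norm (norm_gradient_le_of_lipschitzWith hf x) hinner

/-- Corollary 1 (optimal adversarial example): the point
`x_δ = x - f x • ∇f(x)` lies on the decision boundary, is at distance `f x`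
from `x`, and minimizes the distance from `x` among all points classified
negatively. -/
theorem otnn_optimal_adversarial {E : Type*} [NormedAddCommGroup E]
    [InnerProductSpace ℝ E] [CompleteSpace E]
    (f : E → ℝ) (hf : LipschitzWith 1 f) (x : E) (hdiff : DifferentiableAt ℝ f x)
    (h : ∃ y : E, y ≠ x ∧ 0 ≤ f x ∧ f y ≤ 0 ∧ f x - f y = ‖x - y‖) :
    f (x - f x • gradient f x) = 0 ∧
    ‖x - (x - f x • gradient f x)‖ = f x ∧
    ∀ z : E, f z ≤ 0 → ‖x - z‖ ≥ ‖x - (x - f x • gradient f x)‖ := by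
  obtain ⟨y, hyx, hfx, hfy, hxy⟩ := h
  have hgrad := hf.norm_sub_smul_gradient_eq_sub hdiff hxy
  set d := ‖x - y‖
  have hd : d ≠ 0 := norm_ne_zero_iff.2 (sub_ne_zero.2 hyx.symm)
  have hunit : ‖gradient f x‖ = 1 := by
    have := congrArg norm hgrad
    rwa [norm_smul, norm_norm, mul_eq_left₀ hd] at this
  have hstep : ‖x - (x - f x • gradient f x)‖ = f x := by
    rw [sub_sub_cancel, norm_smul, hunit, mul_one, Real.norm_of_nonneg hfx]
  have hseg : x - f x • gradient f x = x + (f x / d) • (y - x) := by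
    rw [← neg_sub x y, ← hgrad, smul_neg, smul_smul, div_mul_cancel₀ _ hd, sub_eq_add_neg]
  refine ⟨?_, hstep, fun z hz ↦ ?_⟩
  · rw [hseg, hf.apply_add_smul_sub_of_sub_eq_norm hxy (by positivity)
      ((div_le_one₀ (by positivity)).2 (by linarith)), div_mul_cancel₀ _ hd, sub_self]
  · rw [hstep]
    linarith [hf.sub_le_norm_sub x z]
end

section
/- Let E be a complete real inner product space and let f : E → ℝ be 1-Lipschitz and differentiable at x ∈ E. Suppose there exists y ∈ E with y ≠ x such that f(x) ≥ 0, f(y) ≤ 0, and f(x) - f(y) = ‖x - y‖. Then the infimum of ‖x - z‖ over the set {z ∈ E : f(z) ≤ 0} equals f(x), and this infimum is attained (at x_δ = x - f(x) • ∇f(x)). In particular the certified robustness lower bound |f(x)| ≤ ‖x - adv(f, x)‖ is tight. -/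
/-!
Along the segment from `x` to `y` the 1-Lipschitz function `f` must drop at unit speed, since
the total drop `f x - f y` already equals `‖x - y‖`. Hence the derivative of `f` at `x` in the
direction `x - y` is `‖x - y‖`, and by the equality case of Cauchy–Schwarz (as `‖∇f x‖ ≤ 1`)
the gradient is the unit vector pointing from `y` to `x`. Following it backwards for time `f x`
stays on the segment and lands on the zero level set, while the Lipschitz bound shows that no
point of `{f ≤ 0}` is closer than `f x`.
-/

open Set

theorem LipschitzWith.apply_eq_sub_dist_of_dist_add_dist_eq {α : Type*} [PseudoMetricSpace α]
    {f : α → ℝ} (hf : LipschitzWith 1 f) {x y z : α} (hxy : f x - f y = dist x y)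
    (hz : dist x z + dist z y = dist x y) : f z = f x - dist x z := by
  have hxz := hf.le_add_mul x z
  have hzy := hf.le_add_mul z y
  simp only [NNReal.coe_one, one_mul] at hxz hzy
  linarith

theorem LipschitzWith.apply_add_smul_sub_eq_of_sub_eq_norm {E : Type*} [NormedAddCommGroup E]
    [NormedSpace ℝ E] {f : E → ℝ} (hf : LipschitzWith 1 f) {x y : E}
    (hxy : f x - f y = ‖x - y‖) {t : ℝ} (ht : t ∈ Icc 0 1) :
    f (x + t • (y - x)) = f x - t * ‖x - y‖ := by
  have hmem : x + t • (y - x) ∈ segment ℝ x y :=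
    segment_eq_image' ℝ x y ▸ ⟨t, ht, rfl⟩
  rw [hf.apply_eq_sub_dist_of_dist_add_dist_eq (by rwa [dist_eq_norm])
      (dist_add_dist_of_mem_segment hmem), dist_eq_norm, sub_add_cancel_left, norm_neg,
    norm_smul, Real.norm_of_nonneg ht.1, norm_sub_rev]

theorem HasLineDerivAt.eq_of_forall_mem_Icc {E F : Type*} [NormedAddCommGroup E]
    [NormedSpace ℝ E] [NormedAddCommGroup F] [NormedSpace ℝ F] {f : E → F} {f' c : F}
    {x v : E} {ε : ℝ} (hf : HasLineDerivAt ℝ f f' x v) (hε : 0 < ε)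
    (h : ∀ t ∈ Icc 0 ε, f (x + t • v) = f x + t • c) : f' = c := by
  have hlin : HasDerivAt (fun t : ℝ => f x + t • c) c 0 := by
    simpa using ((hasDerivAt_id (0 : ℝ)).smul_const c).const_add (f x)
  have hc : HasDerivWithinAt (fun t : ℝ => f (x + t • v)) c (Ici 0) 0 :=
    hlin.hasDerivWithinAt.congr_of_eventuallyEq
      (Filter.eventually_of_mem (Icc_mem_nhdsGE hε) h) (by simp)
  exact (uniqueDiffOn_Ici 0 0 self_mem_Ici).eq_deriv _ hf.hasDerivWithinAt hc

theorem eq_inv_norm_smul_of_norm_le_one_of_inner_eq_norm {E : Type*} [NormedAddCommGroup E]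
    [InnerProductSpace ℝ E] {g v : E} (hg : ‖g‖ ≤ 1) (hv : v ≠ 0)
    (h : inner ℝ g v = ‖v‖) : g = ‖v‖⁻¹ • v := by
  have hv₀ : 0 < ‖v‖ := norm_pos_iff.2 hv
  have hg₁ : ‖g‖ = 1 :=
    le_antisymm hg (le_of_mul_le_mul_right (by linarith [real_inner_le_norm g v]) hv₀)
  have hpar := inner_eq_norm_mul_iff_real.1 (by rw [h, hg₁, one_mul])
  rwa [hg₁, one_smul, ← eq_inv_smul_iff₀ hv₀.ne'] at hpar

theorem norm_gradient_le_of_lipschitz {E : Type*} [NormedAddCommGroup E] [InnerProductSpace ℝ E]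
    [CompleteSpace E] {f : E → ℝ} {K : NNReal} (hf : LipschitzWith K f) (x : E) :
    ‖gradient f x‖ ≤ K := by
  rw [gradient, LinearIsometryEquiv.norm_map]
  exact norm_fderiv_le_of_lipschitz ℝ hf

/-- Tightness of the certified robustness bound: the infimum of `‖x - z‖` over
`{z | f z ≤ 0}` equals `f x` and is attained at `x_δ = x - f x • ∇f(x)`. -/
theorem otnn_certificate_tight {E : Type*} [NormedAddCommGroup E]
    [InnerProductSpace ℝ E] [CompleteSpace E]
    (f : E → ℝ) (hf : LipschitzWith 1 f) (x : E) (hdiff : DifferentiableAt ℝ f x)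
    (h : ∃ y : E, y ≠ x ∧ 0 ≤ f x ∧ f y ≤ 0 ∧ f x - f y = ‖x - y‖) :
    IsLeast ((fun z => ‖x - z‖) '' {z : E | f z ≤ 0}) (f x) ∧
    f (x - f x • gradient f x) ≤ 0 ∧
    ‖x - (x - f x • gradient f x)‖ = f x := by
  obtain ⟨y, hyx, hfx, hfy, hxy⟩ := h
  have hne : x - y ≠ 0 := sub_ne_zero.2 hyx.symm
  have hr : 0 < ‖x - y‖ := norm_pos_iff.2 hne
  have hseg := fun t (ht : t ∈ Icc (0 : ℝ) 1) => hf.apply_add_smul_sub_eq_of_sub_eq_norm hxy ht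
  have hinner : inner ℝ (gradient f x) (x - y) = ‖x - y‖ := by
    have hslope : inner ℝ (gradient f x) (y - x) = -‖x - y‖ :=
      (hdiff.hasGradientAt.hasFDerivAt.hasLineDerivAt (y - x)).eq_of_forall_mem_Icc one_pos
        fun t ht => by rw [hseg t ht, smul_eq_mul]; ring
    rw [inner_sub_right] at hslope ⊢
    linarith
  have hgrad : gradient f x = ‖x - y‖⁻¹ • (x - y) :=
    eq_inv_norm_smul_of_norm_le_one_of_inner_eq_norm
      (by simpa using norm_gradient_le_of_lipschitz hf x) hne hinner
  have hzero : f (x - f x • gradient f x) ≤ 0 := by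
    have hxδ : x - f x • gradient f x = x + (f x / ‖x - y‖) • (y - x) := by
      rw [hgrad, smul_smul, ← neg_sub x y, smul_neg, ← sub_eq_add_neg, div_eq_mul_inv]
    rw [hxδ, hseg _ ⟨div_nonneg hfx hr.le, div_le_one_of_le₀ (by linarith) hr.le⟩,
      div_mul_cancel₀ _ hr.ne', sub_self]
  have hnorm : ‖x - (x - f x • gradient f x)‖ = f x := by
    rw [sub_sub_cancel, hgrad, norm_smul, norm_smul, norm_inv, norm_norm,
      inv_mul_cancel₀ hr.ne', Real.norm_of_nonneg hfx, mul_one]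
  refine ⟨⟨⟨_, hzero, hnorm⟩, ?_⟩, hzero, hnorm⟩
  rintro _ ⟨z, hz, rfl⟩
  have hxz := hf.le_add_mul x z
  simp only [NNReal.coe_one, one_mul, dist_eq_norm] at hxz
  linarith [show f z ≤ 0 from hz]
end
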